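/- Let S be a memory system all of whose traces are causal, and fix n,m,v ≥ 1. Then every unambiguous trace of S(n,m,v) is sequentially consistent if and only if there exists a witness Ω such that the constraint graph G(Ω)(τ) is acyclic for every unambiguous trace τ of S(n,m,v). -/

import Mathlib

/-! Given a sequentially consistent schedule `f` of an unambiguous trace, let Ω order the writes
to each location as `f` does. Each event reads from the last write that `f` schedules before it,
so every edge of the constraint graph points forward under `f`, and the graph is acyclic.

Conversely, a topological sort of an acyclic constraint graph is a serial schedule. Were an event
to read a value other than that of the last preceding write `w` to its location, the write it
reads from (which exists by causality) is ordered by Ω either before `w`, giving an edge from the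
event to `w`, or after `w`, contradicting that `w` is the last one. -/

/-- A memory operation: read or write. -/
inductive MemOp : Type
  | R : MemOp
  | W : MemOp
deriving DecidableEq

/-- A memory event ⟨op, proc, loc, data⟩. -/
structure MemEvent : Type where
  op : MemOp
  proc : ℕ
  loc : ℕ
  data : ℕ
deriving DecidableEq

instance : Inhabited MemEvent := ⟨⟨MemOp.R, 1, 1, 0⟩⟩

/-- A trace is a finite sequence of memory events (1-indexed via `ev`). -/
abbrev MTrace := List MemEvent

/-- The x-th event of a trace (1-indexed). -/
def ev (τ : MTrace) (x : ℕ) : MemEvent := τ.getD (x - 1) default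

/-- dom(τ) = {1, …, |τ|}. -/
def Dom (τ : MTrace) : Set ℕ := {x | 1 ≤ x ∧ x ≤ τ.length}

/-- P(τ,i): indices of events of processor i. -/
def Pset (τ : MTrace) (i : ℕ) : Set ℕ := {x | x ∈ Dom τ ∧ (ev τ x).proc = i}

/-- L(τ,j): indices of events to location j. -/
def Lset (τ : MTrace) (j : ℕ) : Set ℕ := {x | x ∈ Dom τ ∧ (ev τ x).loc = j}

/-- L^w(τ,j): indices of write events to location j. -/
def Lw (τ : MTrace) (j : ℕ) : Set ℕ := {x | x ∈ Lset τ j ∧ (ev τ x).op = MemOp.W}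

/-- L^r(τ,j): indices of read events to location j. -/
def Lr (τ : MTrace) (j : ℕ) : Set ℕ := {x | x ∈ Lset τ j ∧ (ev τ x).op = MemOp.R}

/-- A trace is unambiguous if every write event has a nonzero data value distinct
from that of every other write event to the same location. -/
def Unambiguous (τ : MTrace) : Prop :=
  ∀ j, ∀ x ∈ Lw τ j, (ev τ x).data ≠ 0 ∧
    ∀ y ∈ Lw τ j, y ≠ x → (ev τ y).data ≠ (ev τ x).data

/-- A trace is causal if the data value of every read event is 0 or equals the data
value of some write event to the same location. -/
def Causal (τ : MTrace) : Prop :=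
  ∀ j, ∀ x ∈ Lr τ j, (ev τ x).data = 0 ∨ ∃ y ∈ Lw τ j, (ev τ y).data = (ev τ x).data

/-- ⟨x,y⟩ ∈ M(τ,i): the total order on P(τ,i) given by index order. -/
def Mrel (τ : MTrace) (i : ℕ) (x y : ℕ) : Prop :=
  x ∈ Pset τ i ∧ y ∈ Pset τ i ∧ x < y

/-- A sequence of memory events (given by its length and 1-indexed access function)
is serial: each event's data value equals that of the latest write to the same
location at an index no larger than its own, and equals 0 if no such write exists. -/
def SerialFn (len : ℕ) (e : ℕ → MemEvent) : Prop :=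
  ∀ u, 1 ≤ u → u ≤ len →
    ((∀ k, 1 ≤ k → k ≤ u → ¬((e k).op = MemOp.W ∧ (e k).loc = (e u).loc)) →
       (e u).data = 0) ∧
    (∀ k, 1 ≤ k → k ≤ u → (e k).op = MemOp.W → (e k).loc = (e u).loc →
       (∀ k', k < k' → k' ≤ u → ¬((e k').op = MemOp.W ∧ (e k').loc = (e u).loc)) →
       (e u).data = (e k).data)

/-- f (with inverse g) is a permutation of {1,…,|τ|} satisfying conditions C1 and C2. -/
def IsSCWitness (τ : MTrace) (f g : ℕ → ℕ) : Prop :=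
  (∀ u ∈ Dom τ, f u ∈ Dom τ) ∧
  (∀ u ∈ Dom τ, g u ∈ Dom τ) ∧
  (∀ u ∈ Dom τ, g (f u) = u) ∧
  (∀ u ∈ Dom τ, f (g u) = u) ∧
  (∀ i u v, Mrel τ i u v → f u < f v) ∧
  SerialFn τ.length (fun x => ev τ (g x))

/-- A trace is sequentially consistent if some permutation satisfies C1 and C2. -/
def SeqConsistent (τ : MTrace) : Prop := ∃ f g, IsSCWitness τ f g

/-- A witness assigns to each trace and location a strict total order on L^w(τ,j). -/
def IsWitness (Ω : MTrace → ℕ → ℕ → ℕ → Prop) : Prop :=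
  ∀ τ j,
    (∀ x y, Ω τ j x y → x ∈ Lw τ j ∧ y ∈ Lw τ j) ∧
    (∀ x, ¬ Ω τ j x x) ∧
    (∀ x y z, Ω τ j x y → Ω τ j y z → Ω τ j x z) ∧
    (∀ x y, x ∈ Lw τ j → y ∈ Lw τ j → x ≠ y → Ω τ j x y ∨ Ω τ j y x)

/-- A witness is simple if it orders the writes to each location by index order. -/
def IsSimple (Ω : MTrace → ℕ → ℕ → ℕ → Prop) : Prop :=
  ∀ τ j x y, Ω τ j x y ↔ (x ∈ Lw τ j ∧ y ∈ Lw τ j ∧ x < y)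

/-- ⟨x,y⟩ ∈ Ω^e(τ,j): the extension of the witness order to all events to location j. -/
def OmegaE (Ω : MTrace → ℕ → ℕ → ℕ → Prop) (τ : MTrace) (j x y : ℕ) : Prop :=
  x ∈ Lset τ j ∧ y ∈ Lset τ j ∧
  (((ev τ x).data = (ev τ y).data ∧ (ev τ x).op = MemOp.W ∧ (ev τ y).op = MemOp.R) ∨
   ((ev τ x).data = 0 ∧ (ev τ y).data ≠ 0) ∨
   (∃ a b, a ∈ Lw τ j ∧ b ∈ Lw τ j ∧ Ω τ j a b ∧
      (ev τ a).data = (ev τ x).data ∧ (ev τ b).data = (ev τ y).data))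

/-- Edge of the constraint graph G(Ω)(τ): union of the M(τ,i) and the Ω^e(τ,j). -/
def GEdge (Ω : MTrace → ℕ → ℕ → ℕ → Prop) (τ : MTrace) (x y : ℕ) : Prop :=
  (∃ i, Mrel τ i x y) ∨ (∃ j, OmegaE Ω τ j x y)

/-- The constraint graph G(Ω)(τ) has a cycle. -/
def HasCycle (Ω : MTrace → ℕ → ℕ → ℕ → Prop) (τ : MTrace) : Prop :=
  ∃ x, Relation.TransGen (GEdge Ω τ) x x

/-- The constraint graph G(Ω)(τ) is acyclic. -/
def Acyclic (Ω : MTrace → ℕ → ℕ → ℕ → Prop) (τ : MTrace) : Prop :=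
  ¬ HasCycle Ω τ

/-- All events of the trace have processor in {1,…,n} and location in {1,…,m}. -/
def InRange (n m : ℕ) (τ : MTrace) : Prop :=
  ∀ e ∈ τ, 1 ≤ e.proc ∧ e.proc ≤ n ∧ 1 ≤ e.loc ∧ e.loc ≤ m

/-- All data values in the trace lie in {0,…,v}. -/
def DataBounded (v : ℕ) (τ : MTrace) : Prop := ∀ e ∈ τ, e.data ≤ v

/-- A memory system with n processors and m locations: for each v ≥ 1, a set S(n,m,v)
of traces whose processors, locations, and data values are in range. -/
structure MemSystem (n m : ℕ) : Type where
  S : ℕ → Set MTrace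
  wf : ∀ v, 1 ≤ v → ∀ τ ∈ S v, InRange n m τ ∧ DataBounded v τ

/-- S(n,m): the union of the S(n,m,v) over v ≥ 1. -/
def MemSystem.traces {n m : ℕ} (M : MemSystem n m) : Set MTrace :=
  {τ | ∃ v, 1 ≤ v ∧ τ ∈ M.S v}

/-- A renaming function λ with λ(j,0) = 0 for every location j. -/
def IsRenaming (lam : ℕ → ℕ → ℕ) : Prop := ∀ j, lam j 0 = 0

/-- λ^d: rename the data value of each event according to its location. -/
def renameD (lam : ℕ → ℕ → ℕ) (τ : MTrace) : MTrace :=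
  τ.map fun e => { e with data := lam e.loc e.data }

/-- The memory system is data independent: a trace is in S(n,m,v) iff it is obtained
from an unambiguous trace of S(n,m) by a renaming function with values in {0,…,v}. -/
def DataIndependent {n m : ℕ} (M : MemSystem n m) : Prop :=
  ∀ v, 1 ≤ v → ∀ τ, τ ∈ M.S v ↔
    ∃ τ' lam, τ' ∈ M.traces ∧ Unambiguous τ' ∧ IsRenaming lam ∧
      (∀ j d, lam j d ≤ v) ∧ τ = renameD lam τ'

/-- λ^p: rename the processor of each event. -/
def renameP (lam : ℕ → ℕ) (τ : MTrace) : MTrace :=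
  τ.map fun e => { e with proc := lam e.proc }

/-- λ^l: rename the location of each event. -/
def renameL (lam : ℕ → ℕ) (τ : MTrace) : MTrace :=
  τ.map fun e => { e with loc := lam e.loc }

/-- λ is a permutation of {1,…,n}. -/
def PermOn (n : ℕ) (lam : ℕ → ℕ) : Prop :=
  Set.BijOn lam (Set.Icc 1 n) (Set.Icc 1 n)

/-- The memory system is processor symmetric. -/
def ProcSymmetric {n m : ℕ} (M : MemSystem n m) : Prop :=
  ∀ lam, PermOn n lam → ∀ v τ, τ ∈ M.S v → renameP lam τ ∈ M.S v

/-- The memory system is location symmetric. -/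
def LocSymmetric {n m : ℕ} (M : MemSystem n m) : Prop :=
  ∀ lam, PermOn m lam → ∀ v τ, τ ∈ M.S v → renameL lam τ ∈ M.S v

/-- x ⊕ 1 in the cyclic group {1,…,k} with identity k. -/
def cyc (k x : ℕ) : ℕ := if x = k then 1 else x + 1

/-- A k-nice cycle u_1,v_1,…,u_k,v_k in G(Ω)(τ): distinct vertices; each ⟨u_x,v_x⟩
is a processor edge, each ⟨v_x,u_{x⊕1}⟩ a location edge; no processor (resp.
location) contributes two edges. -/
def NiceCycle (Ω : MTrace → ℕ → ℕ → ℕ → Prop) (τ : MTrace) (k : ℕ)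
    (u v : ℕ → ℕ) : Prop :=
  1 ≤ k ∧
  (∀ x ∈ Set.Icc 1 k, ∀ y ∈ Set.Icc 1 k, x ≠ y → u x ≠ u y) ∧
  (∀ x ∈ Set.Icc 1 k, ∀ y ∈ Set.Icc 1 k, x ≠ y → v x ≠ v y) ∧
  (∀ x ∈ Set.Icc 1 k, ∀ y ∈ Set.Icc 1 k, u x ≠ v y) ∧
  (∀ x ∈ Set.Icc 1 k, ∃ i, Mrel τ i (u x) (v x)) ∧
  (∀ x ∈ Set.Icc 1 k, ∃ j, OmegaE Ω τ j (v x) (u (cyc k x))) ∧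
  (∀ x ∈ Set.Icc 1 k, ∀ y ∈ Set.Icc 1 k, x ≠ y → ∀ i,
     Mrel τ i (u x) (v x) → ¬ Mrel τ i (u y) (v y)) ∧
  (∀ x ∈ Set.Icc 1 k, ∀ y ∈ Set.Icc 1 k, x ≠ y → ∀ j,
     OmegaE Ω τ j (v x) (u (cyc k x)) → ¬ OmegaE Ω τ j (v y) (u (cyc k y)))

/-- A canonical k-nice cycle: a k-nice cycle whose processor edges are in M(τ,x) and
whose location edges are in Ω^e(τ,x⊕1), for x = 1,…,k. -/
def CanonicalNiceCycle (Ω : MTrace → ℕ → ℕ → ℕ → Prop) (τ : MTrace) (k : ℕ)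
    (u v : ℕ → ℕ) : Prop :=
  NiceCycle Ω τ k u v ∧
  (∀ x ∈ Set.Icc 1 k, Mrel τ x (u x) (v x)) ∧
  (∀ x ∈ Set.Icc 1 k, OmegaE Ω τ (cyc k x) (v x) (u (cyc k x)))

/-- The trace satisfies the automaton Constrain_k(j). -/
def ConstrainK (k j : ℕ) (τ : MTrace) : Prop :=
  (j ≤ k →
    (∀ x ∈ Lw τ j, (ev τ x).data ≤ 2) ∧
    (∀ x ∈ Lw τ j, ∀ y ∈ Lw τ j, (ev τ x).data = 1 → (ev τ y).data = 1 → x = y) ∧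
    (∀ x ∈ Lw τ j, ∀ y ∈ Lw τ j, (ev τ x).data = 0 → (ev τ y).data ≠ 0 → x < y) ∧
    (∀ y ∈ Lw τ j, (ev τ y).data = 2 → ∃ x ∈ Lw τ j, (ev τ x).data = 1 ∧ x < y)) ∧
  (k < j → ∀ x ∈ Lw τ j, (ev τ x).data = 0)

/-- The trace satisfies the automaton Check_k(i). -/
def CheckK (k i : ℕ) (τ : MTrace) : Prop :=
  ∃ x ∈ Dom τ, ∃ y ∈ Dom τ, x < y ∧
    (ev τ x).proc = i ∧ (ev τ x).loc = i ∧
    ((ev τ x).data = 1 ∨ (ev τ x).data = 2) ∧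
    (ev τ y).proc = i ∧ (ev τ y).loc = cyc k i ∧
    ((ev τ y).data = 0 ∨ ((ev τ y).op = MemOp.W ∧ (ev τ y).data = 1))

open Set Relation

section TopologicalSort

variable {α : Type*}

theorem exists_isStrictTotalOrder_of_acyclic {r : α → α → Prop} (hr : ∀ a, ¬ TransGen r a a) :
    ∃ lt : α → α → Prop, IsStrictTotalOrder α lt ∧ ∀ a b, r a b → lt a b := by
  have : IsPartialOrder α (ReflTransGen r) :=
    { refl := fun _ => .refl
      trans := fun _ _ _ => ReflTransGen.trans
      antisymm := fun a b hab hba => by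
        rcases hab.cases_head with rfl | ⟨c, hac, hcb⟩
        · rfl
        · exact (hr a (TransGen.head' hac (hcb.trans hba))).elim }
  obtain ⟨le, hle, hsub⟩ := extend_partialOrder (ReflTransGen r)
  refine ⟨fun a b => ¬ le b a, ?_, fun a b hab hba => ?_⟩
  · exact
      { irrefl := fun a h => h (refl_of le a)
        trans := fun a b c hab hbc hca =>
          hbc (trans_of le hca ((total_of le a b).resolve_right hab))
        trichotomous := fun a b hab hba =>
          antisymm_of le (not_not.1 hba) (not_not.1 hab) }
  · have := antisymm_of le (hsub _ _ (.single hab)) hba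
    subst this
    exact hr a (.single hab)

theorem exists_bijOn_Icc_of_isStrictTotalOrder (lt : α → α → Prop) [IsStrictTotalOrder α lt]
    (s : Finset α) :
    ∃ f : α → ℕ, BijOn f s (Finset.Icc 1 s.card) ∧ ∀ a ∈ s, ∀ b, lt a b → f a < f b := by
  classical
  set f : α → ℕ := fun a => (s.filter (lt · a)).card + 1
  have hmono : ∀ a ∈ s, ∀ b, lt a b → f a < f b := by
    intro a ha b hab
    refine Nat.succ_lt_succ (Finset.card_lt_card ?_)
    refine Finset.ssubset_iff_of_subset (fun c hc => ?_) |>.2 ⟨a, ?_, ?_⟩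
    · simp only [Finset.mem_filter] at hc ⊢
      exact ⟨hc.1, trans_of lt hc.2 hab⟩
    · simp [ha, hab]
    · simp [irrefl_of lt a]
  have hmaps : MapsTo f s (Finset.Icc 1 s.card) := by
    intro a ha
    have : (s.filter (lt · a)).card < s.card :=
      Finset.card_lt_card (Finset.filter_ssubset.2 ⟨a, ha, irrefl_of lt a⟩)
    simp only [Finset.coe_Icc, mem_Icc, f]
    omega
  have hinj : InjOn f s := by
    intro a ha b hb hab
    rcases trichotomous_of lt a b with h | h | h
    · exact absurd hab (hmono a ha b h).ne
    · exact h
    · exact absurd hab (hmono b hb a h).ne'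
  refine ⟨f, ⟨hmaps, hinj, ?_⟩, hmono⟩
  exact Finset.surjOn_of_injOn_of_card_le f hmaps hinj (by simp)

end TopologicalSort

variable {τ : MTrace} {Ω : MTrace → ℕ → ℕ → ℕ → Prop} {f g : ℕ → ℕ} {j w x y : ℕ}

theorem dom_eq_coe_Icc (τ : MTrace) : Dom τ = ↑(Finset.Icc 1 τ.length) := by
  ext; simp [Dom]

theorem Unambiguous.data_ne_zero (hU : Unambiguous τ) (hw : w ∈ Lw τ j) : (ev τ w).data ≠ 0 :=
  (hU j w hw).1

theorem Unambiguous.eq_of_data_eq (hU : Unambiguous τ) (hw : w ∈ Lw τ j) (hx : x ∈ Lw τ j)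
    (h : (ev τ w).data = (ev τ x).data) : w = x :=
  by_contra fun hne => (hU j w hw).2 x hx (Ne.symm hne) h.symm

theorem GEdge.mem_dom (h : GEdge Ω τ x y) : x ∈ Dom τ ∧ y ∈ Dom τ := by
  rcases h with ⟨_, hx, hy, _⟩ | ⟨_, hx, hy, _⟩ <;> exact ⟨hx.1, hy.1⟩

theorem gEdge_of_readsFrom (hw : w ∈ Lw τ j) (hx : x ∈ Lset τ j)
    (hd : (ev τ w).data = (ev τ x).data) (hop : (ev τ x).op = MemOp.R) : GEdge Ω τ w x :=
  Or.inr ⟨j, hw.1, hx, Or.inl ⟨hd, hw.2, hop⟩⟩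

theorem gEdge_of_data_eq_zero (hx : x ∈ Lset τ j) (hy : y ∈ Lset τ j)
    (hx0 : (ev τ x).data = 0) (hy0 : (ev τ y).data ≠ 0) : GEdge Ω τ x y :=
  Or.inr ⟨j, hx, hy, Or.inr (Or.inl ⟨hx0, hy0⟩)⟩

theorem gEdge_of_witness {a b : ℕ} (hx : x ∈ Lset τ j) (hy : y ∈ Lset τ j) (ha : a ∈ Lw τ j)
    (hb : b ∈ Lw τ j) (hab : Ω τ j a b) (hxa : (ev τ a).data = (ev τ x).data)
    (hyb : (ev τ b).data = (ev τ y).data) : GEdge Ω τ x y :=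
  Or.inr ⟨j, hx, hy, Or.inr (Or.inr ⟨a, b, ha, hb, hab, hxa, hyb⟩)⟩

theorem acyclic_of_gEdge_lt (hf : ∀ x y, GEdge Ω τ x y → f x < f y) : Acyclic Ω τ := by
  rintro ⟨x, hx⟩
  have := TransGen.lift (p := (· < ·)) f hf x x hx
  rw [transGen_eq_self] at this
  exact lt_irrefl _ this

theorem Acyclic.exists_bijOn_dom (hac : Acyclic Ω τ) :
    ∃ f, BijOn f (Dom τ) (Dom τ) ∧ ∀ x y, GEdge Ω τ x y → f x < f y := by
  obtain ⟨lt, _, hlt⟩ := exists_isStrictTotalOrder_of_acyclic fun x hx => hac ⟨x, hx⟩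
  obtain ⟨f, hbij, hf⟩ :=
    exists_bijOn_Icc_of_isStrictTotalOrder lt (Finset.Icc 1 τ.length)
  refine ⟨f, ?_, fun x y h => hf x ?_ y (hlt x y h)⟩
  · simpa [dom_eq_coe_Icc] using hbij
  · simpa [dom_eq_coe_Icc] using h.mem_dom.1

def IsLastWriteBefore (τ : MTrace) (f : ℕ → ℕ) (j w x : ℕ) : Prop :=
  w ∈ Lw τ j ∧ f w ≤ f x ∧ ∀ z ∈ Lw τ j, f z ≤ f x → f z ≤ f w

/-- `SerialFn` of the rescheduled sequence `x ↦ ev τ (g x)`, with `g` inverse to `f`,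
read back on the indices of `τ`. -/
def SerialUnder (τ : MTrace) (f : ℕ → ℕ) : Prop :=
  ∀ x ∈ Dom τ, ((∀ z ∈ Lw τ (ev τ x).loc, f x < f z) → (ev τ x).data = 0) ∧
    ∀ w, IsLastWriteBefore τ f (ev τ x).loc w x → (ev τ x).data = (ev τ w).data

theorem exists_isLastWriteBefore {z : ℕ} (hz : z ∈ Lw τ j) (hzx : f z ≤ f x) :
    ∃ w, IsLastWriteBefore τ f j w x := by
  have hfin : {z ∈ Lw τ j | f z ≤ f x}.Finite :=
    (Set.finite_Icc 1 τ.length).subset fun z hz => hz.1.1.1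
  obtain ⟨w, ⟨hw, hwx⟩, hmax⟩ := Set.exists_max_image _ f hfin ⟨z, hz, hzx⟩
  exact ⟨w, hw, hwx, fun z hz hzx => hmax z ⟨hz, hzx⟩⟩

theorem IsSCWitness.serialUnder (h : IsSCWitness τ f g) : SerialUnder τ f := by
  obtain ⟨hf, hg, hgf, hfg, -, hser⟩ := h
  intro x hx
  have hfx := hf x hx
  obtain ⟨hzero, hlast⟩ := hser (f x) hfx.1 hfx.2
  simp only [hgf x hx] at hzero hlast
  refine ⟨fun hafter => hzero fun k hk hkx ⟨hop, hloc⟩ => ?_, fun w ⟨hw, hwx, hmax⟩ => ?_⟩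
  · have hkD : k ∈ Dom τ := ⟨hk, hkx.trans hfx.2⟩
    have := hafter (g k) ⟨⟨hg k hkD, hloc⟩, hop⟩
    rw [hfg k hkD] at this
    omega
  · have hfw := hf w hw.1.1
    have := hlast (f w) hfw.1 hwx
    simp only [hgf w hw.1.1] at this
    refine this hw.2 hw.1.2 fun k hwk hkx ⟨hop, hloc⟩ => ?_
    have hkD : k ∈ Dom τ := ⟨hfw.1.trans hwk.le, hkx.trans hfx.2⟩
    have := hmax (g k) ⟨⟨hg k hkD, hloc⟩, hop⟩
    rw [hfg k hkD] at this
    omega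

theorem SerialUnder.serialFn (hs : SerialUnder τ f) (hf : MapsTo f (Dom τ) (Dom τ))
    (hg : MapsTo g (Dom τ) (Dom τ)) (hgf : InvOn g f (Dom τ) (Dom τ)) :
    SerialFn τ.length (fun u => ev τ (g u)) := by
  intro u hu1 hu2
  have hu : u ∈ Dom τ := ⟨hu1, hu2⟩
  obtain ⟨hzero, hlast⟩ := hs (g u) (hg hu)
  rw [hgf.2 hu] at hzero
  have hwrite : ∀ z ∈ Lw τ (ev τ (g u)).loc,
      (ev τ (g (f z))).op = MemOp.W ∧ (ev τ (g (f z))).loc = (ev τ (g u)).loc := by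
    intro z hz
    rw [hgf.1 hz.1.1]
    exact ⟨hz.2, hz.1.2⟩
  beta_reduce
  refine ⟨fun hnone => hzero fun z hz => ?_, fun k hk1 hku hop hloc hmax => ?_⟩
  · by_contra hzu
    exact hnone (f z) (hf hz.1.1).1 (not_lt.1 hzu) (hwrite z hz)
  · have hk : k ∈ Dom τ := ⟨hk1, hku.trans hu2⟩
    refine hlast (g k) ⟨⟨⟨hg hk, hloc⟩, hop⟩, ?_, fun z hz hzu => ?_⟩
    · rwa [hgf.2 hk, hgf.2 hu]
    · rw [hgf.2 hk]
      rw [hgf.2 hu] at hzu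
      by_contra hkz
      exact hmax (f z) (not_le.1 hkz) hzu (hwrite z hz)

namespace SerialUnder

theorem exists_write_le (hs : SerialUnder τ f) (hx : x ∈ Lset τ j) (hx0 : (ev τ x).data ≠ 0) :
    ∃ z ∈ Lw τ j, f z ≤ f x := by
  by_contra! h
  exact hx0 ((hs x hx.1).1 (hx.2 ▸ h))

theorem lt_of_data_eq_zero (hU : Unambiguous τ) (hs : SerialUnder τ f) (hx : x ∈ Lset τ j)
    (hx0 : (ev τ x).data = 0) (hw : w ∈ Lw τ j) : f x < f w := by
  by_contra hwx
  obtain ⟨w', hw'⟩ := exists_isLastWriteBefore hw (not_lt.1 hwx)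
  have := (hs x hx.1).2 w' (hx.2 ▸ hw')
  exact hU.data_ne_zero hw'.1 (this ▸ hx0)

theorem isLastWriteBefore_of_data_eq (hU : Unambiguous τ) (hs : SerialUnder τ f)
    (hx : x ∈ Lset τ j) (hw : w ∈ Lw τ j) (hd : (ev τ x).data = (ev τ w).data) :
    IsLastWriteBefore τ f j w x := by
  obtain ⟨z, hz, hzx⟩ := hs.exists_write_le hx (hd ▸ hU.data_ne_zero hw)
  obtain ⟨w', hw'⟩ := exists_isLastWriteBefore hz hzx
  have := (hs x hx.1).2 w' (hx.2 ▸ hw')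
  rwa [hU.eq_of_data_eq hw hw'.1 (hd ▸ this)]

theorem lt_of_gEdge (hU : Unambiguous τ) (hs : SerialUnder τ f) (hinj : InjOn f (Dom τ))
    (hM : ∀ i x y, Mrel τ i x y → f x < f y) (hΩ : ∀ j a b, Ω τ j a b → f a < f b)
    (h : GEdge Ω τ x y) : f x < f y := by
  obtain ⟨i, hxy⟩ | ⟨j, hx, hy, ⟨hd, hxW, hyR⟩ | ⟨hx0, hy0⟩ | ⟨a, b, ha, hb, hab, hda, hdb⟩⟩ := h
  · exact hM i x y hxy
  · have hxy : x ≠ y := by rintro rfl; simp [hxW] at hyR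
    refine lt_of_le_of_ne ?_ (hinj.ne hx.1 hy.1 hxy)
    exact (isLastWriteBefore_of_data_eq hU hs hy ⟨hx, hxW⟩ hd.symm).2.1
  · obtain ⟨z, hz, hzy⟩ := hs.exists_write_le hy hy0
    exact (lt_of_data_eq_zero hU hs hx hx0 hz).trans_le hzy
  · have hby := isLastWriteBefore_of_data_eq hU hs hy hb hdb.symm
    have hax := isLastWriteBefore_of_data_eq hU hs hx ha hda.symm
    refine lt_of_lt_of_le (not_le.1 fun hbx => ?_) hby.2.1
    exact absurd (hax.2.2 b hb hbx) (not_le.2 (hΩ j a b hab))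

end SerialUnder

theorem serialUnder_of_gEdge_lt (hU : Unambiguous τ) (hC : Causal τ) (hW : IsWitness Ω)
    (hf : ∀ x y, GEdge Ω τ x y → f x < f y) : SerialUnder τ f := by
  intro x hx
  set j := (ev τ x).loc
  have hxL : x ∈ Lset τ j := ⟨hx, rfl⟩
  have source : (ev τ x).data ≠ 0 →
      ∃ y ∈ Lw τ j, (ev τ y).data = (ev τ x).data ∧ f y ≤ f x := by
    intro hd
    cases hop : (ev τ x).op with
    | W => exact ⟨x, ⟨hxL, hop⟩, rfl, le_rfl⟩
    | R =>
      obtain h0 | ⟨y, hy, hdy⟩ := hC j x ⟨hxL, hop⟩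
      · exact absurd h0 hd
      · exact ⟨y, hy, hdy, (hf y x (gEdge_of_readsFrom hy hxL hdy hop)).le⟩
  refine ⟨fun hafter => ?_, fun w ⟨hw, hwx, hlast⟩ => ?_⟩
  · by_contra hd
    obtain ⟨y, hy, -, hyx⟩ := source hd
    exact absurd (hafter y hy) (not_lt.2 hyx)
  · by_contra hne
    by_cases hd : (ev τ x).data = 0
    · exact absurd (hf x w (gEdge_of_data_eq_zero hxL hw.1 hd (hU.data_ne_zero hw)))
        (not_lt.2 hwx)
    obtain ⟨y, hy, hdy, hyx⟩ := source hd
    have hyw : y ≠ w := by rintro rfl; exact hne hdy.symm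
    rcases (hW τ j).2.2.2 y w hy hw hyw with hyw | hwy
    · exact absurd (hf x w (gEdge_of_witness hxL hw.1 hy hw hyw hdy rfl)) (not_lt.2 hwx)
    · have hwy := hf w y (gEdge_of_witness hw.1 hy.1 hw hy hwy rfl rfl)
      exact absurd (hlast y hy hyx) (not_le.2 hwy)

open Classical in
noncomputable def scSchedule (τ : MTrace) : ℕ → ℕ :=
  if h : SeqConsistent τ then h.choose else id

theorem SeqConsistent.exists_isSCWitness_scSchedule (h : SeqConsistent τ) :
    ∃ g, IsSCWitness τ (scSchedule τ) g := by
  rw [scSchedule, dif_pos h]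
  exact h.choose_spec

theorem injOn_scSchedule (τ : MTrace) : InjOn (scSchedule τ) (Dom τ) := by
  by_cases h : SeqConsistent τ
  · obtain ⟨g, -, -, hgf, -⟩ := h.exists_isSCWitness_scSchedule
    exact LeftInvOn.injOn hgf
  · rw [scSchedule, dif_neg h]
    exact injOn_id _

def scheduleWitness (σ : MTrace → ℕ → ℕ) (τ : MTrace) (j a b : ℕ) : Prop :=
  a ∈ Lw τ j ∧ b ∈ Lw τ j ∧ σ τ a < σ τ b

theorem isWitness_scheduleWitness {σ : MTrace → ℕ → ℕ} (hσ : ∀ τ, InjOn (σ τ) (Dom τ)) :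
    IsWitness (scheduleWitness σ) := by
  intro τ j
  refine ⟨fun a b h => ⟨h.1, h.2.1⟩, fun a h => lt_irrefl _ h.2.2,
    fun a b c hab hbc => ⟨hab.1, hbc.2.1, hab.2.2.trans hbc.2.2⟩, fun a b ha hb hab => ?_⟩
  rcases (hσ τ).ne ha.1.1 hb.1.1 hab |>.lt_or_gt with h | h
  · exact Or.inl ⟨ha, hb, h⟩
  · exact Or.inr ⟨hb, ha, h⟩

theorem unambiguous_sc_iff_witness_acyclic_general
    (n m v : ℕ) (hv : 1 ≤ v)
    (M : MemSystem n m) (hC : ∀ τ ∈ M.traces, Causal τ) :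
    (∀ τ ∈ M.S v, Unambiguous τ → SeqConsistent τ) ↔
      (∃ Ω, IsWitness Ω ∧ ∀ τ ∈ M.S v, Unambiguous τ → Acyclic Ω τ) := by
  constructor
  · intro hSC
    refine ⟨scheduleWitness scSchedule, isWitness_scheduleWitness injOn_scSchedule,
      fun τ hτ hU => acyclic_of_gEdge_lt (f := scSchedule τ) fun x y => ?_⟩
    obtain ⟨g, hw⟩ := (hSC τ hτ hU).exists_isSCWitness_scSchedule
    exact hw.serialUnder.lt_of_gEdge hU (injOn_scSchedule τ) hw.2.2.2.2.1 fun _ _ _ h => h.2.2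
  · rintro ⟨Ω, hW, hac⟩ τ hτ hU
    obtain ⟨f, hf, hmono⟩ := (hac τ hτ hU).exists_bijOn_dom
    have hgf := hf.invOn_invFunOn
    have hg := hf.surjOn.mapsTo_invFunOn
    have hs := serialUnder_of_gEdge_lt hU (hC τ ⟨v, hv, hτ⟩) hW hmono
    exact ⟨f, _, hf.mapsTo, hg, hgf.1, hgf.2, fun i x y h => hmono x y (Or.inl ⟨i, h⟩),
      hs.serialFn hf.mapsTo hg hgf⟩

/-- For a memory system all of whose traces are causal, every unambiguous
trace of S(n,m,v) is sequentially consistent iff there is a witness Ω such that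
G(Ω)(τ) is acyclic for every unambiguous trace τ of S(n,m,v). -/
theorem unambiguous_sc_iff_witness_acyclic
    (n m v : ℕ) (hn : 1 ≤ n) (hm : 1 ≤ m) (hv : 1 ≤ v)
    (M : MemSystem n m) (hC : ∀ τ ∈ M.traces, Causal τ) :
    (∀ τ ∈ M.S v, Unambiguous τ → SeqConsistent τ) ↔
      (∃ Ω, IsWitness Ω ∧ ∀ τ ∈ M.S v, Unambiguous τ → Acyclic Ω τ) :=
  unambiguous_sc_iff_witness_acyclic_general n m v hv M hC
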